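/- arXiv:2009.00874 — 4 statements merged into one kernel-verified Lean document; each statement's English description precedes it below -/
import Mathlib

section
/- For each j ∈ {1,…,d}, the two cost-allocation formulas for the Shapley effect agree: (1/d) Σ_{u⊆{1,…,d}∖{j}} C(d−1,|u|)^{−1} (τ̲²_{u∪{j}} − τ̲²_u) = (1/d) Σ_{u⊆{1,…,d}∖{j}} C(d−1,|u|)^{−1} (τ̄²_{u∪{j}} − τ̄²_u), where C(n,k) denotes the binomial coefficient. -/
open MeasureTheory Finset

/-!
Both Shapley formulas only see the variance components through the increments of the effect
functions. For `j ∉ u` the increment of the main effect is `∑_{v ⊆ u} σ²_{v ∪ {j}}`, and that of the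
total effect is the same sum over the subsets `v` of the complement of `u ∪ {j}`. Hence the
main-effect increment at `u` equals the total-effect increment at `([1:d] ∖ {j}) ∖ u`, and since
`C(d-1, k) = C(d-1, d-1-k)` the complementation `u ↦ ([1:d] ∖ {j}) ∖ u` matches the two sums term
by term.
-/

/-- The ANOVA decomposition component `f_u`, defined recursively by
`f_∅ = μ` (the mean) and
`f_u(x) = ∫ f(x_u, y_{-u}) ρ_{-u}(y_{-u}) dy_{-u} - ∑_{v ⊊ u} f_v(x)`. -/
noncomputable def anova {d : ℕ} (μ : Fin d → Measure ℝ) (f : (Fin d → ℝ) → ℝ) :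
    Finset (Fin d) → (Fin d → ℝ) → ℝ := fun u x =>
  (∫ y, f (fun i => if i ∈ u then x i else y i) ∂Measure.pi μ) -
    ∑ v ∈ (u.powerset.erase u).attach, anova μ f v.1 x
termination_by u => u.card
decreasing_by
  exact Finset.card_lt_card (Finset.ssubset_iff_subset_ne.mpr
    ⟨Finset.mem_powerset.mp (Finset.mem_of_mem_erase v.2), Finset.ne_of_mem_erase v.2⟩)

/-- The ANOVA variance component `σ_u² = ∫ (f_u)² dρ` (note that `f_u` depends only on
the coordinates in `u`, so this agrees with `∫_{Ω_u} (f_u(x_u))² ρ_u(x_u) dx_u`). -/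
noncomputable def sigmaSq {d : ℕ} (μ : Fin d → Measure ℝ) (f : (Fin d → ℝ) → ℝ)
    (u : Finset (Fin d)) : ℝ :=
  ∫ x, (anova μ f u x) ^ 2 ∂Measure.pi μ

/-- The main effect `τ̲²_u = ∑_{∅ ≠ v ⊆ u} σ_v²` (equal to `0` for `u = ∅`). -/
noncomputable def mainEffect {d : ℕ} (μ : Fin d → Measure ℝ) (f : (Fin d → ℝ) → ℝ)
    (u : Finset (Fin d)) : ℝ :=
  ∑ v ∈ u.powerset.erase ∅, sigmaSq μ f v

/-- The total effect `τ̄²_u = ∑_{∅ ≠ v ⊆ [1:d], v ∩ u ≠ ∅} σ_v²` (equal to `0` for `u = ∅`). -/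
noncomputable def totalEffect {d : ℕ} (μ : Fin d → Measure ℝ) (f : (Fin d → ℝ) → ℝ)
    (u : Finset (Fin d)) : ℝ :=
  ∑ v ∈ (Finset.univ : Finset (Fin d)).powerset.filter (fun v => (v ∩ u).Nonempty),
    sigmaSq μ f v

/-- The Shapley effect
`φ_j = (1/d) ∑_{u ⊆ [1:d]∖{j}} C(d-1, |u|)⁻¹ (τ̄²_{u∪{j}} - τ̄²_u)`. -/
noncomputable def shapley {d : ℕ} (μ : Fin d → Measure ℝ) (f : (Fin d → ℝ) → ℝ)
    (j : Fin d) : ℝ :=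
  (1 / (d : ℝ)) * ∑ u ∈ (Finset.univ.erase j).powerset,
    ((d - 1).choose u.card : ℝ)⁻¹ *
      (totalEffect μ f (insert j u) - totalEffect μ f u)

section SetFunction

variable {α M : Type*} [DecidableEq α] [AddCommGroup M] (s : Finset α → M)

theorem Finset.sum_powerset_erase_empty_insert_sub {j : α} {u : Finset α} (hj : j ∉ u) :
    ∑ v ∈ (insert j u).powerset.erase ∅, s v - ∑ v ∈ u.powerset.erase ∅, s v =
      ∑ v ∈ u.powerset, s (insert j v) := by
  rw [sum_erase_eq_sub (empty_mem_powerset _), sum_erase_eq_sub (empty_mem_powerset _),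
    sum_powerset_insert hj]
  abel

variable [Fintype α]

theorem Finset.sum_filter_inter_nonempty (t : Finset α) :
    ∑ v ∈ univ.powerset.filter (fun v => (v ∩ t).Nonempty), s v =
      ∑ v ∈ univ.powerset, s v - ∑ v ∈ (univ \ t).powerset, s v := by
  have hdisjoint : univ.powerset.filter (fun v => ¬(v ∩ t).Nonempty) = (univ \ t).powerset := by
    ext v
    simp [not_nonempty_iff_eq_empty, subset_sdiff, disjoint_iff_inter_eq_empty]
  rw [eq_sub_iff_add_eq, ← hdisjoint, sum_filter_add_sum_filter_not]

theorem Finset.sum_filter_inter_insert_nonempty_sub {j : α} {u : Finset α} (hj : j ∉ u) :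
    ∑ v ∈ univ.powerset.filter (fun v => (v ∩ insert j u).Nonempty), s v -
        ∑ v ∈ univ.powerset.filter (fun v => (v ∩ u).Nonempty), s v =
      ∑ v ∈ (univ \ insert j u).powerset, s (insert j v) := by
  have hcompl : univ \ u = insert j (univ \ insert j u) := by
    ext x
    by_cases hx : x = j <;> simp [hx, hj]
  rw [sum_filter_inter_nonempty, sum_filter_inter_nonempty, hcompl,
    sum_powerset_insert (by simp)]
  abel

end SetFunction

section Effects

variable {d : ℕ} (μ : Fin d → Measure ℝ) (f : (Fin d → ℝ) → ℝ)

theorem mainEffect_insert_sub {j : Fin d} {u : Finset (Fin d)} (hj : j ∉ u) :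
    mainEffect μ f (insert j u) - mainEffect μ f u =
      ∑ v ∈ u.powerset, sigmaSq μ f (insert j v) :=
  sum_powerset_erase_empty_insert_sub _ hj

theorem totalEffect_insert_sub {j : Fin d} {u : Finset (Fin d)} (hj : j ∉ u) :
    totalEffect μ f (insert j u) - totalEffect μ f u =
      ∑ v ∈ (univ \ insert j u).powerset, sigmaSq μ f (insert j v) :=
  sum_filter_inter_insert_nonempty_sub _ hj

theorem totalEffect_insert_sub_compl {j : Fin d} {u : Finset (Fin d)} (hu : u ⊆ univ.erase j) :
    totalEffect μ f (insert j (univ.erase j \ u)) - totalEffect μ f (univ.erase j \ u) =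
      mainEffect μ f (insert j u) - mainEffect μ f u := by
  have hju : j ∉ u := fun h => (mem_erase.1 (hu h)).1 rfl
  have hcompl : univ \ insert j (univ.erase j \ u) = u := by
    rw [sdiff_insert, ← erase_sdiff_comm, Finset.sdiff_sdiff_eq_self hu]
  rw [totalEffect_insert_sub μ f (by simp), hcompl, mainEffect_insert_sub μ f hju]

end Effects

theorem shapley_main_eq_total_general {d : ℕ} (μ : Fin d → Measure ℝ)
    (f : (Fin d → ℝ) → ℝ)
    (j : Fin d) :
    (1 / (d : ℝ)) * ∑ u ∈ (Finset.univ.erase j).powerset,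
        ((d - 1).choose u.card : ℝ)⁻¹ *
          (mainEffect μ f (insert j u) - mainEffect μ f u) =
    (1 / (d : ℝ)) * ∑ u ∈ (Finset.univ.erase j).powerset,
        ((d - 1).choose u.card : ℝ)⁻¹ *
          (totalEffect μ f (insert j u) - totalEffect μ f u) := by
  have hcard : (univ.erase j).card = d - 1 := by simp
  congr 1
  refine sum_nbij' (univ.erase j \ ·) (univ.erase j \ ·)
    (fun _ _ => mem_powerset.2 sdiff_subset) (fun _ _ => mem_powerset.2 sdiff_subset)
    (fun _ hu => Finset.sdiff_sdiff_eq_self (mem_powerset.1 hu))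
    (fun _ hu => Finset.sdiff_sdiff_eq_self (mem_powerset.1 hu)) fun u hu => ?_
  have hu := mem_powerset.1 hu
  rw [totalEffect_insert_sub_compl μ f hu, card_sdiff_of_subset hu, hcard,
    Nat.choose_symm (hcard ▸ card_le_card hu)]

/-- The two cost-allocation (Shapley) formulas, based on main effects and on total
effects respectively, agree. -/
theorem shapley_main_eq_total {d : ℕ} (μ : Fin d → Measure ℝ)
    [∀ i, IsProbabilityMeasure (μ i)] (f : (Fin d → ℝ) → ℝ)
    (hf : MemLp f 2 (Measure.pi μ)) (j : Fin d) :
    (1 / (d : ℝ)) * ∑ u ∈ (Finset.univ.erase j).powerset,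
        ((d - 1).choose u.card : ℝ)⁻¹ *
          (mainEffect μ f (insert j u) - mainEffect μ f u) =
    (1 / (d : ℝ)) * ∑ u ∈ (Finset.univ.erase j).powerset,
        ((d - 1).choose u.card : ℝ)⁻¹ *
          (totalEffect μ f (insert j u) - totalEffect μ f u) :=
  shapley_main_eq_total_general μ f j
end

section
/- For each j ∈ {1,…,d}, the Shapley effect is bracketed by the singleton main and total effects: τ̲²_{{j}} ≤ φ_j ≤ τ̄²_{{j}}. -/
open MeasureTheory Finset

/-!
Adding `j` to a coalition `u ∌ j` raises the total effect by the variance components `σ_v²`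
with `j ∈ v` and `v ∩ u = ∅`. Since all `σ_v² ≥ 0`, this increment is at least `σ_{j}²` and
at most `τ̄²_{j}`. The Shapley effect is a weighted average of these increments: the weights
`C(d-1, |u|)⁻¹` sum to `d`, since each of the `d` possible sizes of `u` contributes `1`.
-/

lemma Finset.sum_powerset_inv_choose_card {α : Type*} (s : Finset α) :
    ∑ u ∈ s.powerset, ((#s).choose #u : ℝ)⁻¹ = #s + 1 := by
  rw [sum_powerset_apply_card (fun k => ((#s).choose k : ℝ)⁻¹)]
  have hterm : ∀ m ∈ range (#s + 1), (#s).choose m • ((#s).choose m : ℝ)⁻¹ = 1 := by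
    intro m hm
    have hpos : 0 < (#s).choose m := Nat.choose_pos (Nat.lt_succ_iff.mp (mem_range.mp hm))
    rw [nsmul_eq_mul, mul_inv_cancel₀ (by exact_mod_cast hpos.ne')]
  rw [sum_congr rfl hterm, sum_const, card_range, nsmul_one, Nat.cast_succ]

lemma sum_powerset_univ_erase_inv_choose_card {d : ℕ} (j : Fin d) :
    ∑ u ∈ (univ.erase j).powerset, ((d - 1).choose #u : ℝ)⁻¹ = d := by
  have hcard : #(univ.erase j) = d - 1 := by simp
  rw [← hcard, sum_powerset_inv_choose_card, hcard, Nat.cast_pred j.pos, sub_add_cancel]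

section Effects

variable {d : ℕ} (μ : Fin d → Measure ℝ) (f : (Fin d → ℝ) → ℝ)

lemma sigmaSq_nonneg (u : Finset (Fin d)) : 0 ≤ sigmaSq μ f u :=
  integral_nonneg fun _ => sq_nonneg _

lemma mainEffect_singleton (j : Fin d) : mainEffect μ f {j} = sigmaSq μ f {j} := by
  have hsubsets : ({j} : Finset (Fin d)).powerset.erase ∅ = {{j}} := by
    ext v
    simp only [mem_erase, mem_powerset, subset_singleton_iff, mem_singleton]
    grind [singleton_ne_empty]
  rw [mainEffect, hsubsets, sum_singleton]

lemma totalEffect_insert_sub_totalEffect (j : Fin d) (u : Finset (Fin d)) :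
    totalEffect μ f (insert j u) - totalEffect μ f u =
      ∑ v ∈ univ.powerset.filter (fun v => j ∈ v ∧ Disjoint v u), sigmaSq μ f v := by
  rw [sub_eq_iff_eq_add, totalEffect, totalEffect, ← sum_union]
  · congr 1
    ext v
    simp only [mem_filter, mem_union, mem_powerset, subset_univ, true_and,
      ← not_disjoint_iff_nonempty_inter, disjoint_insert_right]
    tauto
  · exact disjoint_filter.2 fun v _ h h' => not_disjoint_iff_nonempty_inter.2 h' h.2

lemma sigmaSq_singleton_le_totalEffect_insert_sub {j : Fin d} {u : Finset (Fin d)}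
    (hj : j ∉ u) : sigmaSq μ f {j} ≤ totalEffect μ f (insert j u) - totalEffect μ f u := by
  rw [totalEffect_insert_sub_totalEffect]
  exact single_le_sum (fun v _ => sigmaSq_nonneg μ f v) (by simpa using hj)

lemma totalEffect_insert_sub_le_totalEffect_singleton (j : Fin d) (u : Finset (Fin d)) :
    totalEffect μ f (insert j u) - totalEffect μ f u ≤ totalEffect μ f {j} := by
  rw [totalEffect_insert_sub_totalEffect, totalEffect]
  refine sum_le_sum_of_subset_of_nonneg ?_ fun v _ _ => sigmaSq_nonneg μ f v
  intro v hv
  simp only [mem_filter] at hv ⊢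
  exact ⟨hv.1, j, by simpa using hv.2.1⟩

lemma shapley_eq_centerMass (j : Fin d) :
    shapley μ f j = (univ.erase j).powerset.centerMass (fun u => ((d - 1).choose #u : ℝ)⁻¹)
      (fun u => totalEffect μ f (insert j u) - totalEffect μ f u) := by
  simp only [shapley, centerMass, sum_powerset_univ_erase_inv_choose_card, one_div, smul_eq_mul]

end Effects

theorem mainEffect_le_shapley_le_totalEffect_general {d : ℕ} (μ : Fin d → Measure ℝ)
    (f : (Fin d → ℝ) → ℝ) (j : Fin d) :
    mainEffect μ f {j} ≤ shapley μ f j ∧ shapley μ f j ≤ totalEffect μ f {j} := by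
  have hweights : 0 < ∑ u ∈ (univ.erase j).powerset, ((d - 1).choose #u : ℝ)⁻¹ := by
    rw [sum_powerset_univ_erase_inv_choose_card]
    exact_mod_cast j.pos
  rw [mainEffect_singleton, shapley_eq_centerMass, ← Set.mem_Icc]
  refine (convex_Icc _ _).centerMass_mem (fun u _ => by positivity) hweights fun u hu => ⟨?_, ?_⟩
  · exact sigmaSq_singleton_le_totalEffect_insert_sub μ f (subset_erase.1 (mem_powerset.1 hu)).2
  · exact totalEffect_insert_sub_le_totalEffect_singleton μ f j u

/-- The Shapley effect is bracketed by the singleton main and total effects: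
`τ̲²_{j} ≤ φ_j ≤ τ̄²_{j}`. -/
theorem mainEffect_le_shapley_le_totalEffect {d : ℕ} (μ : Fin d → Measure ℝ)
    [∀ i, IsProbabilityMeasure (μ i)] (f : (Fin d → ℝ) → ℝ)
    (hf : MemLp f 2 (Measure.pi μ)) (j : Fin d) :
    mainEffect μ f {j} ≤ shapley μ f j ∧ shapley μ f j ≤ totalEffect μ f {j} :=
  mainEffect_le_shapley_le_totalEffect_general μ f j
end

section
/- For each j ∈ {1,…,d}, the Shapley effect admits the averaged pick-freeze representation φ_j = (1/d) Σ_{ℓ=0}^{d−1} C(d−1,ℓ)^{−1} Σ_{u⊆{1,…,d}∖{j}, |u|=ℓ} ∫_Ω ∫_Ω g_u(x,y) ρ(x) ρ(y) dx dy, i.e., φ_j equals the expectation of g_{U_j(ℓ)}(x,y) where ℓ is uniform on {0,1,…,d−1}, U_j(ℓ) is a uniformly distributed subset of {1,…,d}∖{j} with cardinality ℓ, and x, y are independent with density ρ. -/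
open MeasureTheory Finset

/-- The pick-freeze integrand
`g_u(x,y) = (1/2)(f(x) - f(y_{u∪{j}}, x_{-(u∪{j})}))² - (1/2)(f(x) - f(y_u, x_{-u}))²`
for a fixed coordinate `j` and a subset `u ⊆ [1:d]∖{j}`. -/
noncomputable def gPF {d : ℕ} (f : (Fin d → ℝ) → ℝ) (j : Fin d) (u : Finset (Fin d))
    (x y : Fin d → ℝ) : ℝ :=
  (1 / 2) * (f x - f (fun i => if i ∈ insert j u then y i else x i)) ^ 2 -
    (1 / 2) * (f x - f (fun i => if i ∈ u then y i else x i)) ^ 2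

/-!
Write `P_s f (x) = ∫ f(x_s, y_{-s}) dρ(y)`. For independent `x, y, z ∼ ρ` the pair
`((x_v, y_{-v}), (x_w, z_{-w}))` has the same law as the pair for `v ∩ w`, since coordinatewise it
is `(x_i, x_i)` on `v ∩ w` and two independent draws elsewhere; hence
`∫ P_v f · P_w f = ∫ (P_{v ∩ w} f)²`. Together with the recursion `f_u = P_u f - ∑_{v ⊂ u} f_v`
this makes the ANOVA components orthogonal, so `∫ (P_s f)² = ∑_{v ⊆ s} σ_v²` and
`τ̄²_s = ∫ f² - ∫ (P_{sᶜ} f)² = ½ ∫∫ (f(x) - f(y_s, x_{-s}))²` (Jansen's formula). Each increment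
`τ̄²_{u ∪ {j}} - τ̄²_u` of the Shapley sum is therefore `∫∫ g_u`, and it remains to group the
subsets `u` by cardinality.
-/

section L2

variable {α β : Type*} [MeasurableSpace α] [MeasurableSpace β] {ν : Measure α}

theorem sq_integral_le_integral_sq [IsProbabilityMeasure ν] {g : α → ℝ} (hg : Integrable g ν)
    (hg2 : Integrable (fun a => g a ^ 2) ν) : (∫ a, g a ∂ν) ^ 2 ≤ ∫ a, g a ^ 2 ∂ν :=
  (even_two.convexOn_pow (𝕜 := ℝ)).map_integral_le (continuous_pow 2).continuousOn
    isClosed_univ (ae_of_all _ fun _ => Set.mem_univ _) hg hg2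

theorem MeasureTheory.MeasurePreserving.integral_comp_of_aestronglyMeasurable {G : Type*}
    [NormedAddCommGroup G] [NormedSpace ℝ G] {ρ : Measure β} {φ : α → β}
    (hφ : MeasurePreserving φ ν ρ) {g : β → G} (hg : AEStronglyMeasurable g ρ) :
    ∫ a, g (φ a) ∂ν = ∫ b, g b ∂ρ := by
  rw [← hφ.map_eq] at hg ⊢
  exact (integral_map hφ.measurable.aemeasurable hg).symm

theorem integral_half_sq_sub {g h : α → ℝ} (hg : MemLp g 2 ν) (hh : MemLp h 2 ν) :
    ∫ a, 1 / 2 * (g a - h a) ^ 2 ∂ν =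
      1 / 2 * ∫ a, g a ^ 2 ∂ν + 1 / 2 * ∫ a, h a ^ 2 ∂ν - ∫ a, g a * h a ∂ν := by
  have hg2 : Integrable (fun a => 1 / 2 * g a ^ 2) ν := hg.integrable_sq.const_mul _
  have hh2 : Integrable (fun a => 1 / 2 * h a ^ 2) ν := hh.integrable_sq.const_mul _
  have hgh : Integrable (fun a => g a * h a) ν := hg.integrable_mul hh
  have hexp : ∀ a, 1 / 2 * (g a - h a) ^ 2 = 1 / 2 * g a ^ 2 + 1 / 2 * h a ^ 2 - g a * h a :=
    fun a => by ring
  simp_rw [hexp]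
  rw [integral_sub (f := fun a => 1 / 2 * g a ^ 2 + 1 / 2 * h a ^ 2) (hg2.add hh2) hgh,
    integral_add hg2 hh2, integral_const_mul, integral_const_mul]

end L2

section CopySwap

variable {ι : Type*} [DecidableEq ι]

/-- On the coordinates in `v \ w` the first and second copies of `ι` are exchanged, on those in
`w \ v` the first and third. -/
def copySwap (v w : Finset ι) : ι ⊕ ι ⊕ ι → ι ⊕ ι ⊕ ι
  | .inl i => if i ∈ v \ w then .inr (.inl i) else if i ∈ w \ v then .inr (.inr i) else .inl i
  | .inr (.inl i) => if i ∈ v \ w then .inl i else .inr (.inl i)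
  | .inr (.inr i) => if i ∈ w \ v then .inl i else .inr (.inr i)

theorem copySwap_involutive (v w : Finset ι) : Function.Involutive (copySwap v w) := by
  rintro (i | i | i) <;> by_cases hv : i ∈ v <;> by_cases hw : i ∈ w <;> simp [copySwap, hv, hw]

theorem elim_id_comp_copySwap (v w : Finset ι) :
    Sum.elim id (Sum.elim id id) ∘ copySwap v w = Sum.elim id (Sum.elim id id) := by
  ext (i | i | i) <;> by_cases hv : i ∈ v <;> by_cases hw : i ∈ w <;> simp [copySwap, hv, hw]

end CopySwap

section PickFreeze

variable {ι E : Type*} [Fintype ι] [DecidableEq ι] [MeasurableSpace E]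
  (μ : ι → Measure E) [∀ i, IsProbabilityMeasure (μ i)]

theorem measurePreserving_piecewise (s : Finset ι) :
    MeasurePreserving (fun p : (ι → E) × (ι → E) => s.piecewise p.1 p.2)
      ((Measure.pi μ).prod (Measure.pi μ)) (Measure.pi μ) := by
  have hpick : MeasurePreserving
      (fun (a : ι → E × E) i => (if i ∈ s then Prod.fst else Prod.snd) (a i))
      (Measure.pi fun i => (μ i).prod (μ i)) (Measure.pi μ) :=
    measurePreserving_pi _ _ fun i => by
      split_ifs
      exacts [measurePreserving_fst, measurePreserving_snd]
  convert hpick.comp (measurePreserving_arrowProdEquivProdArrow E E ι μ μ).symm using 1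
  ext p i
  by_cases hi : i ∈ s <;>
    simp [hi, MeasurableEquiv.arrowProdEquivProdArrow, Equiv.arrowProdEquivProdArrow]

theorem measurePreserving_piecewise_swap (s : Finset ι) :
    MeasurePreserving (fun p : (ι → E) × (ι → E) => s.piecewise p.2 p.1)
      ((Measure.pi μ).prod (Measure.pi μ)) (Measure.pi μ) := by
  simpa only [piecewise_compl] using measurePreserving_piecewise μ sᶜ

omit [DecidableEq ι] in
theorem measurePreserving_sumPiEquivProdPi_triple :
    MeasurePreserving (((MeasurableEquiv.sumPiEquivProdPi fun _ : ι ⊕ ι ⊕ ι => E).trans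
        (MeasurableEquiv.prodCongr (MeasurableEquiv.refl _)
          (MeasurableEquiv.sumPiEquivProdPi fun _ : ι ⊕ ι => E))))
      (Measure.pi fun k => μ (Sum.elim id (Sum.elim id id) k))
      ((Measure.pi μ).prod ((Measure.pi μ).prod (Measure.pi μ))) :=
  ((MeasurePreserving.id _).prod
    (measurePreserving_sumPiEquivProdPi fun k => μ (Sum.elim id id k))).comp
      (measurePreserving_sumPiEquivProdPi _)

/-- With `(x, y, z)` realised on three copies of `ι`, the coordinate permutation `copySwap v w`
carries the pair `((x_v, y_{-v}), (x_w, z_{-w}))` to the pair for `v ∩ w`. -/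
theorem integral_piecewise_pair_inter {G : Type*} [NormedAddCommGroup G] [NormedSpace ℝ G]
    (F : (ι → E) → (ι → E) → G) (v w : Finset ι) :
    ∫ p, F (v.piecewise p.1 p.2.1) (w.piecewise p.1 p.2.2)
        ∂(Measure.pi μ).prod ((Measure.pi μ).prod (Measure.pi μ)) =
      ∫ p, F ((v ∩ w).piecewise p.1 p.2.1) ((v ∩ w).piecewise p.1 p.2.2)
        ∂(Measure.pi μ).prod ((Measure.pi μ).prod (Measure.pi μ)) := by
  set σ := (copySwap_involutive v w).toPerm
  have hσ : MeasurePreserving (MeasurableEquiv.arrowCongr' σ (MeasurableEquiv.refl E))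
      (Measure.pi fun k => μ (Sum.elim id (Sum.elim id id) k))
      (Measure.pi fun k => μ (Sum.elim id (Sum.elim id id) k)) :=
    measurePreserving_arrowCongr' _ _ σ _ fun k => by
      rw [← congr_fun (elim_id_comp_copySwap v w) k]
      exact MeasurePreserving.id _
  rw [← (measurePreserving_sumPiEquivProdPi_triple μ).integral_comp',
    ← (measurePreserving_sumPiEquivProdPi_triple μ).integral_comp', ← hσ.integral_comp']
  congr 1
  ext X
  congr 1 <;> ext i <;> by_cases hv : i ∈ v <;> by_cases hw : i ∈ w <;>
    simp [hv, hw, σ, copySwap, Finset.piecewise, MeasurableEquiv.arrowCongr',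
      Equiv.arrowCongr', Equiv.arrowCongr, MeasurableEquiv.coe_sumPiEquivProdPi,
      Equiv.sumPiEquivProdPi, MeasurableEquiv.prodCongr, Equiv.prodCongr]

/-- `P_s f (x) = ∫ f(x_s, y_{-s}) dρ(y)`, the conditional mean of `f` given the coordinates
in `s`. -/
noncomputable def partialMean (f : (ι → E) → ℝ) (s : Finset ι) (x : ι → E) : ℝ :=
  ∫ y, f (s.piecewise x y) ∂Measure.pi μ

variable {μ} {f : (ι → E) → ℝ}

theorem partialMean_univ : partialMean μ f univ = f := by
  ext x
  simp [partialMean]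

theorem aestronglyMeasurable_partialMean (hf : AEStronglyMeasurable f (Measure.pi μ))
    (s : Finset ι) : AEStronglyMeasurable (partialMean μ f s) (Measure.pi μ) :=
  (hf.comp_measurePreserving (measurePreserving_piecewise μ s)).integral_prod_right'

theorem memLp_partialMean (hf : MemLp f 2 (Measure.pi μ)) (s : Finset ι) :
    MemLp (partialMean μ f s) 2 (Measure.pi μ) := by
  have hF := hf.comp_measurePreserving (measurePreserving_piecewise μ s)
  have hF2 : Integrable (fun p => f (s.piecewise p.1 p.2) ^ 2)
      ((Measure.pi μ).prod (Measure.pi μ)) := hF.integrable_sq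
  rw [memLp_two_iff_integrable_sq (aestronglyMeasurable_partialMean hf.1 s)]
  refine hF2.integral_prod_left.mono ((aestronglyMeasurable_partialMean hf.1 s).pow 2) ?_
  filter_upwards [hF2.prod_right_ae, (hF.integrable one_le_two).prod_right_ae] with x h2 h1
  rw [Real.norm_of_nonneg (sq_nonneg _),
    Real.norm_of_nonneg (integral_nonneg fun _ => sq_nonneg _)]
  exact sq_integral_le_integral_sq h1 h2

theorem integral_partialMean_mul_eq_integral_prod (hf : MemLp f 2 (Measure.pi μ))
    (v w : Finset ι) :
    ∫ x, partialMean μ f v x * partialMean μ f w x ∂Measure.pi μ =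
      ∫ p, f (v.piecewise p.1 p.2.1) * f (w.piecewise p.1 p.2.2)
        ∂(Measure.pi μ).prod ((Measure.pi μ).prod (Measure.pi μ)) := by
  have hv : MemLp (fun p : (ι → E) × (ι → E) × (ι → E) => f (v.piecewise p.1 p.2.1)) 2
      ((Measure.pi μ).prod ((Measure.pi μ).prod (Measure.pi μ))) :=
    hf.comp_measurePreserving ((measurePreserving_piecewise μ v).comp
      ((MeasurePreserving.id _).prod measurePreserving_fst))
  have hw : MemLp (fun p : (ι → E) × (ι → E) × (ι → E) => f (w.piecewise p.1 p.2.2)) 2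
      ((Measure.pi μ).prod ((Measure.pi μ).prod (Measure.pi μ))) :=
    hf.comp_measurePreserving ((measurePreserving_piecewise μ w).comp
      ((MeasurePreserving.id _).prod measurePreserving_snd))
  rw [← integral_integral (f := fun x (q : (ι → E) × (ι → E)) =>
    f (v.piecewise x q.1) * f (w.piecewise x q.2)) (hv.integrable_mul hw)]
  exact integral_congr_ae (ae_of_all _ fun x => (integral_prod_mul _ _).symm)

theorem integral_partialMean_mul_partialMean (hf : MemLp f 2 (Measure.pi μ)) (v w : Finset ι) :
    ∫ x, partialMean μ f v x * partialMean μ f w x ∂Measure.pi μ =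
      ∫ x, partialMean μ f (v ∩ w) x * partialMean μ f (v ∩ w) x ∂Measure.pi μ := by
  rw [integral_partialMean_mul_eq_integral_prod hf, integral_partialMean_mul_eq_integral_prod hf,
    integral_piecewise_pair_inter μ (fun a b => f a * f b)]

theorem integral_mul_comp_piecewise_swap (hf : MemLp f 2 (Measure.pi μ)) (s : Finset ι) :
    ∫ p, f p.1 * f (s.piecewise p.2 p.1) ∂(Measure.pi μ).prod (Measure.pi μ) =
      ∫ x, partialMean μ f sᶜ x * partialMean μ f sᶜ x ∂Measure.pi μ := by
  simp_rw [← piecewise_compl s]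
  rw [← integral_integral (f := fun x y => f x * f (sᶜ.piecewise x y))
    ((hf.comp_measurePreserving measurePreserving_fst).integrable_mul
      (hf.comp_measurePreserving (measurePreserving_piecewise μ sᶜ)))]
  have hfactor : ∀ x, ∫ y, f x * f (sᶜ.piecewise x y) ∂Measure.pi μ =
      partialMean μ f univ x * partialMean μ f sᶜ x := fun x => by
    rw [partialMean_univ, integral_const_mul, partialMean]
  rw [integral_congr_ae (ae_of_all _ hfactor), integral_partialMean_mul_partialMean hf,
    univ_inter]

theorem integrable_half_sq_sub_comp_piecewise_swap (hf : MemLp f 2 (Measure.pi μ))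
    (s : Finset ι) :
    Integrable (fun p : (ι → E) × (ι → E) => 1 / 2 * (f p.1 - f (s.piecewise p.2 p.1)) ^ 2)
      ((Measure.pi μ).prod (Measure.pi μ)) :=
  ((hf.comp_measurePreserving measurePreserving_fst).sub
    (hf.comp_measurePreserving (measurePreserving_piecewise_swap μ s))).integrable_sq.const_mul _

/-- Jansen's pick-freeze formula. -/
theorem integral_half_sq_sub_comp_piecewise_swap (hf : MemLp f 2 (Measure.pi μ))
    (s : Finset ι) :
    ∫ p, 1 / 2 * (f p.1 - f (s.piecewise p.2 p.1)) ^ 2 ∂(Measure.pi μ).prod (Measure.pi μ) =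
      ∫ x, f x ^ 2 ∂Measure.pi μ -
        ∫ x, partialMean μ f sᶜ x * partialMean μ f sᶜ x ∂Measure.pi μ := by
  have hswap := measurePreserving_piecewise_swap μ s
  have hfst : MemLp (fun p : (ι → E) × (ι → E) => f p.1) 2
      ((Measure.pi μ).prod (Measure.pi μ)) :=
    hf.comp_measurePreserving measurePreserving_fst
  have hpick : MemLp (fun p : (ι → E) × (ι → E) => f (s.piecewise p.2 p.1)) 2
      ((Measure.pi μ).prod (Measure.pi μ)) :=
    hf.comp_measurePreserving hswap
  rw [integral_half_sq_sub hfst hpick,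
    integral_mul_comp_piecewise_swap hf s,
    measurePreserving_fst.integral_comp_of_aestronglyMeasurable (g := fun x => f x ^ 2)
      (hf.1.pow 2),
    hswap.integral_comp_of_aestronglyMeasurable (g := fun x => f x ^ 2) (hf.1.pow 2)]
  ring

end PickFreeze

section Anova

variable {d : ℕ} {μ : Fin d → Measure ℝ} [∀ i, IsProbabilityMeasure (μ i)]
  {f : (Fin d → ℝ) → ℝ}

omit [∀ i, IsProbabilityMeasure (μ i)] in
theorem anova_eq (u : Finset (Fin d)) (x : Fin d → ℝ) :
    anova μ f u x = partialMean μ f u x - ∑ v ∈ u.ssubsets, anova μ f v x := by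
  rw [anova, ← sum_attach u.ssubsets]
  rfl

omit [∀ i, IsProbabilityMeasure (μ i)] in
theorem sum_powerset_anova (u : Finset (Fin d)) (x : Fin d → ℝ) :
    ∑ v ∈ u.powerset, anova μ f v x = partialMean μ f u x := by
  rw [← add_sum_erase _ _ (mem_powerset_self u), anova_eq]
  exact sub_add_cancel _ _

theorem memLp_anova (hf : MemLp f 2 (Measure.pi μ)) (u : Finset (Fin d)) :
    MemLp (anova μ f u) 2 (Measure.pi μ) := by
  induction u using Finset.strongInduction with
  | H u ih =>
    rw [funext (anova_eq u)]
    exact (memLp_partialMean hf u).sub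
      (memLp_finsetSum _ fun v hv => ih v (mem_ssubsets.mp hv))

theorem integral_anova_mul_partialMean_of_not_subset (hf : MemLp f 2 (Measure.pi μ))
    {u w : Finset (Fin d)} (huw : ¬u ⊆ w) :
    ∫ x, anova μ f u x * partialMean μ f w x ∂Measure.pi μ = 0 := by
  induction u using Finset.strongInduction with
  | H u ih =>
    have hint : ∀ v, Integrable (fun x => anova μ f v x * partialMean μ f w x) (Measure.pi μ) :=
      fun v => (memLp_anova hf v).integrable_mul (memLp_partialMean hf w)
    have hPP : Integrable (fun x => partialMean μ f u x * partialMean μ f w x) (Measure.pi μ) :=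
      (memLp_partialMean hf u).integrable_mul (memLp_partialMean hf w)
    -- the components `f_v`, `v ⊂ u`, with `v ⊄ w` drop out, leaving those of `u ∩ w`
    have hsum : ∑ v ∈ u.ssubsets, ∫ x, anova μ f v x * partialMean μ f w x ∂Measure.pi μ =
        ∫ x, partialMean μ f (u ∩ w) x * partialMean μ f w x ∂Measure.pi μ := by
      have hsub : (u ∩ w).powerset ⊆ u.ssubsets := fun v hv =>
        mem_ssubsets.mpr ((mem_powerset.mp hv).trans_ssubset
          (ssubset_of_subset_of_ne inter_subset_left fun h => huw (h ▸ inter_subset_right)))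
      rw [← sum_subset hsub fun v hv hvw => ih v (mem_ssubsets.mp hv) fun h => hvw
          (mem_powerset.mpr (subset_inter (mem_ssubsets.mp hv).subset h)),
        ← integral_finsetSum _ fun v _ => hint v]
      simp_rw [← sum_mul, sum_powerset_anova]
    calc ∫ x, anova μ f u x * partialMean μ f w x ∂Measure.pi μ
        = ∫ x, partialMean μ f u x * partialMean μ f w x ∂Measure.pi μ -
            ∑ v ∈ u.ssubsets, ∫ x, anova μ f v x * partialMean μ f w x ∂Measure.pi μ := by
          simp_rw [anova_eq u, sub_mul, sum_mul]
          rw [integral_sub hPP (integrable_finsetSum _ fun v _ => hint v),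
            integral_finsetSum _ fun v _ => hint v]
      _ = 0 := by
          rw [hsum, integral_partialMean_mul_partialMean hf (u ∩ w) w,
            integral_partialMean_mul_partialMean hf u w, inter_right_idem, sub_self]

theorem integral_anova_mul_anova_of_not_subset (hf : MemLp f 2 (Measure.pi μ))
    {u u' : Finset (Fin d)} (hu : ¬u ⊆ u') :
    ∫ x, anova μ f u x * anova μ f u' x ∂Measure.pi μ = 0 := by
  induction u' using Finset.strongInduction with
  | H u' ih =>
    have hint : ∀ v, Integrable (fun x => anova μ f u x * anova μ f v x) (Measure.pi μ) :=
      fun v => (memLp_anova hf u).integrable_mul (memLp_anova hf v)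
    have hfP : Integrable (fun x => anova μ f u x * partialMean μ f u' x) (Measure.pi μ) :=
      (memLp_anova hf u).integrable_mul (memLp_partialMean hf u')
    simp_rw [anova_eq u', mul_sub, mul_sum]
    rw [integral_sub hfP (integrable_finsetSum _ fun v _ => hint v),
      integral_finsetSum _ fun v _ => hint v,
      integral_anova_mul_partialMean_of_not_subset hf hu,
      sum_eq_zero fun v hv =>
        ih v (mem_ssubsets.mp hv) fun h => hu (h.trans (mem_ssubsets.mp hv).subset),
      sub_zero]

theorem integral_anova_mul_anova_of_ne (hf : MemLp f 2 (Measure.pi μ)) {u u' : Finset (Fin d)}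
    (h : u ≠ u') : ∫ x, anova μ f u x * anova μ f u' x ∂Measure.pi μ = 0 := by
  by_cases hu : u ⊆ u'
  · simp_rw [mul_comm (anova μ f u _)]
    exact integral_anova_mul_anova_of_not_subset hf fun hu' => h (hu.antisymm hu')
  · exact integral_anova_mul_anova_of_not_subset hf hu

theorem integral_partialMean_mul_self (hf : MemLp f 2 (Measure.pi μ)) (s : Finset (Fin d)) :
    ∫ x, partialMean μ f s x * partialMean μ f s x ∂Measure.pi μ =
      ∑ v ∈ s.powerset, sigmaSq μ f v := by
  have hint : ∀ v w, Integrable (fun x => anova μ f v x * anova μ f w x) (Measure.pi μ) :=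
    fun v w => (memLp_anova hf v).integrable_mul (memLp_anova hf w)
  simp_rw [← sum_powerset_anova s, sum_mul_sum]
  rw [integral_finsetSum _ fun v _ => integrable_finsetSum _ fun w _ => hint v w]
  refine sum_congr rfl fun v hv => ?_
  rw [integral_finsetSum _ fun w _ => hint v w, sum_eq_single_of_mem v hv
    fun w _ hw => integral_anova_mul_anova_of_ne hf hw.symm]
  simp only [sigmaSq, sq]

theorem totalEffect_eq_integral_half_sq_sub (hf : MemLp f 2 (Measure.pi μ))
    (s : Finset (Fin d)) :
    totalEffect μ f s =
      ∫ p, 1 / 2 * (f p.1 - f (s.piecewise p.2 p.1)) ^ 2 ∂(Measure.pi μ).prod (Measure.pi μ) := by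
  have hdisjoint : (univ.powerset.filter fun v => ¬(v ∩ s).Nonempty) = sᶜ.powerset := by
    ext v
    simp [subset_compl_iff_disjoint_right, disjoint_iff_inter_eq_empty, not_nonempty_iff_eq_empty]
  calc totalEffect μ f s
      = ∑ v ∈ univ.powerset, sigmaSq μ f v - ∑ v ∈ sᶜ.powerset, sigmaSq μ f v := by
        rw [totalEffect, ← hdisjoint, ← sum_filter_add_sum_filter_not univ.powerset
          (fun v => (v ∩ s).Nonempty), add_sub_cancel_right]
    _ = ∫ x, f x ^ 2 ∂Measure.pi μ -
          ∫ x, partialMean μ f sᶜ x * partialMean μ f sᶜ x ∂Measure.pi μ := by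
        simp_rw [← integral_partialMean_mul_self hf, partialMean_univ, sq]
    _ = _ := (integral_half_sq_sub_comp_piecewise_swap hf s).symm

omit [∀ i, IsProbabilityMeasure (μ i)] in
theorem gPF_eq (j : Fin d) (u : Finset (Fin d)) (x y : Fin d → ℝ) :
    gPF f j u x y = 1 / 2 * (f x - f ((insert j u).piecewise y x)) ^ 2 -
      1 / 2 * (f x - f (u.piecewise y x)) ^ 2 :=
  rfl

theorem integral_integral_gPF (hf : MemLp f 2 (Measure.pi μ)) (j : Fin d) (u : Finset (Fin d)) :
    ∫ x, ∫ y, gPF f j u x y ∂Measure.pi μ ∂Measure.pi μ =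
      totalEffect μ f (insert j u) - totalEffect μ f u := by
  have hint := integrable_half_sq_sub_comp_piecewise_swap hf (μ := μ)
  simp_rw [gPF_eq]
  rw [integral_integral ((hint _).sub (hint _)), integral_sub (hint _) (hint _),
    totalEffect_eq_integral_half_sq_sub hf, totalEffect_eq_integral_half_sq_sub hf]

end Anova

/-- Averaged pick-freeze representation of the Shapley effect:
`φ_j = (1/d) ∑_{ℓ=0}^{d-1} C(d-1,ℓ)⁻¹ ∑_{u ⊆ [1:d]∖{j}, |u|=ℓ} ∫∫ g_u(x,y) ρ(x) ρ(y) dx dy`,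
i.e. `φ_j` is the expectation of `g_{U_j(ℓ)}(x,y)` for `ℓ` uniform on `{0,…,d-1}`,
`U_j(ℓ)` a uniform subset of `[1:d]∖{j}` of cardinality `ℓ`, and `x, y ∼ ρ` independent. -/
theorem shapley_eq_expectation_gPF {d : ℕ} (μ : Fin d → Measure ℝ)
    [∀ i, IsProbabilityMeasure (μ i)] (f : (Fin d → ℝ) → ℝ)
    (hf : MemLp f 2 (Measure.pi μ)) (j : Fin d) :
    shapley μ f j =
      (1 / (d : ℝ)) * ∑ ℓ ∈ Finset.range d, ((d - 1).choose ℓ : ℝ)⁻¹ *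
        ∑ u ∈ (Finset.univ.erase j).powerset.filter (fun u => u.card = ℓ),
          ∫ x, ∫ y, gPF f j u x y ∂Measure.pi μ ∂Measure.pi μ := by
  have hcard : ∀ u ∈ (univ.erase j).powerset, u.card ∈ range d := fun u hu => by
    have := card_le_card (mem_powerset.mp hu)
    rw [card_erase_of_mem (mem_univ j), card_univ, Fintype.card_fin] at this
    exact mem_range.mpr (this.trans_lt (Nat.sub_one_lt_of_lt j.2))
  rw [shapley, ← sum_fiberwise_of_maps_to hcard]
  congr 1
  refine sum_congr rfl fun ℓ _ => ?_
  rw [mul_sum]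
  refine sum_congr rfl fun u hu => ?_
  rw [(mem_filter.mp hu).2, integral_integral_gPF hf]
end

section
/- Assume M_4(f) := ∫_Ω (f(x))⁴ ρ(x) dx < ∞. Then for each j ∈ {1,…,d}, the variance of the single-sample quantity g_{U_j(ℓ)}(x,y), taken with respect to independent x,y ∼ ρ, ℓ uniform on {0,1,…,d−1}, and U_j(ℓ) a uniform subset of {1,…,d}∖{j} of cardinality ℓ, is bounded by 16 M_4(f); in particular it is finite. -/
open MeasureTheory Finset

instance {d : ℕ} : MeasurableSpace (Finset (Fin d)) := ⊤

/-- The law of the random subset `U_j(ℓ)`, where `ℓ` is uniform on `{0, 1, …, d-1}` and,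
given `ℓ`, `U_j(ℓ)` is a uniformly distributed subset of `[1:d]∖{j}` of cardinality `ℓ`:
each subset `u ⊆ [1:d]∖{j}` receives probability `(1/d) · C(d-1, |u|)⁻¹`. -/
noncomputable def subsetLaw (d : ℕ) (j : Fin d) : Measure (Finset (Fin d)) :=
  ∑ u ∈ (Finset.univ.erase j).powerset,
    (((d : ENNReal) * ((d - 1).choose u.card : ENNReal))⁻¹) • Measure.dirac u

/-!
Pointwise, `g_u(x, y)² ≤ 8 f(x)⁴ + 4 f(y_{u∪{j}}, x_{-(u∪{j})})⁴ + 4 f(y_u, x_{-u})⁴`. Each of the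
three points at which `f` is evaluated is again distributed according to `ρ`, for every `u` and
hence also for a random `u` independent of `x` and `y`, since its coordinates are independent
draws from the `ρ_i`. So the second moment of `g_{U_j(ℓ)}`, and with it the variance, is at most
`(8 + 4 + 4) M₄(f)`.
-/

open ProbabilityTheory
open scoped ENNReal

/-- No measurability is needed: a non-integrable `X` has (junk) mean `0`. -/
theorem ProbabilityTheory.evariance_le_lintegral_enorm_sq {Ω : Type*} [MeasurableSpace Ω]
    {μ : Measure Ω} [IsProbabilityMeasure μ] (X : Ω → ℝ) :
    evariance X μ ≤ ∫⁻ ω, ‖X ω‖ₑ ^ 2 ∂μ := by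
  by_cases hX : Integrable X μ
  · rw [evariance_def' hX.aestronglyMeasurable]
    exact tsub_le_self
  · simp [evariance, integral_undef hX]

theorem MeasureTheory.MeasurePreserving.lintegral_comp_of_aemeasurable {α β : Type*}
    [MeasurableSpace α] [MeasurableSpace β] {μ : Measure α} {ν : Measure β} {T : α → β}
    (hT : MeasurePreserving T μ ν) {h : β → ℝ≥0∞} (hh : AEMeasurable h ν) :
    ∫⁻ a, h (T a) ∂μ = ∫⁻ b, h b ∂ν := by
  rw [← hT.map_eq] at hh ⊢
  exact (lintegral_map' hh hT.measurable.aemeasurable).symm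

theorem MeasureTheory.MeasurePreserving.lintegral_add_add_comp {α β : Type*}
    [MeasurableSpace α] [MeasurableSpace β] {μ : Measure α} {ν : Measure β} {T₁ T₂ T₃ : α → β}
    (h₁ : MeasurePreserving T₁ μ ν) (h₂ : MeasurePreserving T₂ μ ν)
    (h₃ : MeasurePreserving T₃ μ ν) {h : β → ℝ≥0∞} (hh : AEMeasurable h ν) (a b c : ℝ≥0∞) :
    ∫⁻ x, a * h (T₁ x) + b * h (T₂ x) + c * h (T₃ x) ∂μ = (a + b + c) * ∫⁻ y, h y ∂ν := by
  have hcomp : ∀ {T}, MeasurePreserving T μ ν → AEMeasurable (fun x => h (T x)) μ :=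
    fun hT => hh.comp_quasiMeasurePreserving hT.quasiMeasurePreserving
  have hmul : ∀ {T}, MeasurePreserving T μ ν → ∀ r : ℝ≥0∞,
      ∫⁻ x, r * h (T x) ∂μ = r * ∫⁻ y, h y ∂ν := fun hT r => by
    rw [lintegral_const_mul'' r (hcomp hT), hT.lintegral_comp_of_aemeasurable hh]
  have hsum : AEMeasurable (fun x => a * h (T₁ x) + b * h (T₂ x)) μ :=
    ((hcomp h₁).const_mul a).add ((hcomp h₂).const_mul b)
  rw [lintegral_add_left' hsum (fun x => c * h (T₃ x)),
    lintegral_add_left' ((hcomp h₁).const_mul a) (fun x => b * h (T₂ x)),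
    hmul h₁, hmul h₂, hmul h₃, add_mul, add_mul]

theorem measurePreserving_prod_of_forall {α S β : Type*} [MeasurableSpace α]
    [MeasurableSpace S] [MeasurableSpace β] {μ : Measure α} [SFinite μ] {κ : Measure S}
    [IsProbabilityMeasure κ] {ν : Measure β} {T : α × S → β} (hT : Measurable T)
    (h : ∀ s, MeasurePreserving (fun a => T (a, s)) μ ν) :
    MeasurePreserving T (μ.prod κ) ν := by
  refine ⟨hT, Measure.ext fun A hA => ?_⟩
  rw [Measure.map_apply hT hA, Measure.prod_apply_symm (hT hA)]
  simp_rw [Set.preimage_preimage, (h _).measure_preimage hA.nullMeasurableSet]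
  simp

theorem measurePreserving_piecewise_s14 {ι α : Type*} [Fintype ι] [DecidableEq ι]
    [MeasurableSpace α] (μ : ι → Measure α) [∀ i, IsProbabilityMeasure (μ i)] (s : Finset ι) :
    MeasurePreserving (fun q : (ι → α) × (ι → α) => s.piecewise q.2 q.1)
      ((Measure.pi μ).prod (Measure.pi μ)) (Measure.pi μ) := by
  have hcoord : ∀ i, MeasurePreserving (fun p : α × α => if i ∈ s then p.2 else p.1)
      ((μ i).prod (μ i)) (μ i) := fun i => by
    split_ifs
    · exact measurePreserving_snd
    · exact measurePreserving_fst
  convert (measurePreserving_pi _ _ hcoord).comp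
    (measurePreserving_arrowProdEquivProdArrow α α ι μ μ).symm using 1
  ext q i
  simp [Finset.piecewise, MeasurableEquiv.arrowProdEquivProdArrow, Equiv.arrowProdEquivProdArrow]

theorem measurePreserving_piecewise_prod {ι α S : Type*} [Fintype ι] [DecidableEq ι]
    [MeasurableSpace α] (μ : ι → Measure α) [∀ i, IsProbabilityMeasure (μ i)]
    [MeasurableSpace S] [MeasurableSingletonClass S] [Countable S] (κ : Measure S)
    [IsProbabilityMeasure κ] (σ : S → Finset ι) :
    MeasurePreserving (fun p : (ι → α) × (ι → α) × S => (σ p.2.2).piecewise p.2.1 p.1)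
      ((Measure.pi μ).prod ((Measure.pi μ).prod κ)) (Measure.pi μ) :=
  (measurePreserving_prod_of_forall (T := fun r => (σ r.2).piecewise r.1.2 r.1.1)
      (measurable_from_prod_countable_left fun s =>
        (measurePreserving_piecewise_s14 μ (σ s)).measurable)
      fun s => measurePreserving_piecewise_s14 μ (σ s)).comp
    (measurePreserving_prodAssoc _ _ _).symm

instance {d : ℕ} : MeasurableSingletonClass (Finset (Fin d)) := ⟨fun _ => trivial⟩

theorem sum_powerset_erase_inv_mul_choose_card {d : ℕ} (j : Fin d) :
    ∑ u ∈ (Finset.univ.erase j).powerset,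
      ((d : ℝ≥0∞) * ((d - 1).choose u.card : ℝ≥0∞))⁻¹ = 1 := by
  have hd : 0 < d := j.pos
  have hcard : (Finset.univ.erase j).card = d - 1 := by
    rw [Finset.card_erase_of_mem (Finset.mem_univ j), Finset.card_univ, Fintype.card_fin]
  have hterm : ∀ m ∈ Finset.range d,
      (d - 1).choose m • ((d : ℝ≥0∞) * ((d - 1).choose m : ℝ≥0∞))⁻¹ = (d : ℝ≥0∞)⁻¹ := by
    intro m hm
    have hC : ((d - 1).choose m : ℝ≥0∞) ≠ 0 :=
      Nat.cast_ne_zero.mpr (Nat.choose_pos (by simp at hm; omega)).ne'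
    rw [nsmul_eq_mul, ENNReal.mul_inv (by simp) (by simp), mul_left_comm,
      ENNReal.mul_inv_cancel hC (by simp), mul_one]
  rw [Finset.sum_powerset_apply_card (fun m => ((d : ℝ≥0∞) * ((d - 1).choose m : ℝ≥0∞))⁻¹),
    hcard, Nat.sub_add_cancel hd, Finset.sum_congr rfl hterm, Finset.sum_const,
    Finset.card_range, nsmul_eq_mul, ENNReal.mul_inv_cancel (by simp; omega) (by simp)]

instance {d : ℕ} (j : Fin d) : IsProbabilityMeasure (subsetLaw d j) :=
  ⟨by simp [subsetLaw, sum_powerset_erase_inv_mul_choose_card]⟩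

theorem sq_half_sq_sub_sub_half_sq_sub_le (s t w : ℝ) :
    (1 / 2 * (s - t) ^ 2 - 1 / 2 * (s - w) ^ 2) ^ 2 ≤ 8 * s ^ 4 + 4 * t ^ 4 + 4 * w ^ 4 := by
  nlinarith [sq_nonneg (s + t), sq_nonneg (s + w), sq_nonneg (s ^ 2 - t ^ 2),
    sq_nonneg (s ^ 2 - w ^ 2), sq_nonneg ((s - t) ^ 2 + (s - w) ^ 2)]

theorem enorm_half_sq_sub_sub_half_sq_sub_sq_le (s t w : ℝ) :
    ‖1 / 2 * (s - t) ^ 2 - 1 / 2 * (s - w) ^ 2‖ₑ ^ 2 ≤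
      8 * ENNReal.ofReal (s ^ 4) + 4 * ENNReal.ofReal (t ^ 4) + 4 * ENNReal.ofReal (w ^ 4) := by
  rw [Real.enorm_eq_ofReal_abs, ← ENNReal.ofReal_pow (abs_nonneg _), sq_abs]
  refine (ENNReal.ofReal_le_ofReal (sq_half_sq_sub_sub_half_sq_sub_le s t w)).trans_eq ?_
  rw [ENNReal.ofReal_add (by positivity) (by positivity),
    ENNReal.ofReal_add (by positivity) (by positivity), ENNReal.ofReal_mul (by norm_num),
    ENNReal.ofReal_mul (by norm_num), ENNReal.ofReal_mul (by norm_num)]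
  norm_num

theorem variance_gPF_le_general {d : ℕ} (μ : Fin d → Measure ℝ)
    [∀ i, IsProbabilityMeasure (μ i)] (f : (Fin d → ℝ) → ℝ)
    (hf4 : Integrable (fun x => (f x) ^ 4) (Measure.pi μ)) (j : Fin d) :
    ProbabilityTheory.evariance (fun p => gPF f j p.2.2 p.1 p.2.1)
        ((Measure.pi μ).prod ((Measure.pi μ).prod (subsetLaw d j))) ≤
      ENNReal.ofReal (16 * ∫ x, (f x) ^ 4 ∂Measure.pi μ) ∧
    ProbabilityTheory.variance (fun p => gPF f j p.2.2 p.1 p.2.1)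
        ((Measure.pi μ).prod ((Measure.pi μ).prod (subsetLaw d j))) ≤
      16 * ∫ x, (f x) ^ 4 ∂Measure.pi μ := by
  set P := (Measure.pi μ).prod ((Measure.pi μ).prod (subsetLaw d j))
  have hfst : MeasurePreserving (fun p : (Fin d → ℝ) × (Fin d → ℝ) × Finset (Fin d) => p.1) P
      (Measure.pi μ) := measurePreserving_fst
  have hnew : MeasurePreserving (fun p : (Fin d → ℝ) × (Fin d → ℝ) × Finset (Fin d) =>
      (insert j p.2.2).piecewise p.2.1 p.1) P (Measure.pi μ) :=
    measurePreserving_piecewise_prod μ (subsetLaw d j) (insert j)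
  have hold : MeasurePreserving (fun p : (Fin d → ℝ) × (Fin d → ℝ) × Finset (Fin d) =>
      p.2.2.piecewise p.2.1 p.1) P (Measure.pi μ) :=
    measurePreserving_piecewise_prod μ (subsetLaw d j) id
  have hmoment : ∫⁻ p, ‖gPF f j p.2.2 p.1 p.2.1‖ₑ ^ 2 ∂P ≤
      ENNReal.ofReal (16 * ∫ x, (f x) ^ 4 ∂Measure.pi μ) := calc
    _ ≤ ∫⁻ p, 8 * ENNReal.ofReal (f p.1 ^ 4) +
          4 * ENNReal.ofReal (f ((insert j p.2.2).piecewise p.2.1 p.1) ^ 4) +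
          4 * ENNReal.ofReal (f (p.2.2.piecewise p.2.1 p.1) ^ 4) ∂P :=
      lintegral_mono fun p => enorm_half_sq_sub_sub_half_sq_sub_sq_le _ _ _
    _ = (8 + 4 + 4) * ∫⁻ x, ENNReal.ofReal (f x ^ 4) ∂Measure.pi μ :=
      hfst.lintegral_add_add_comp hnew hold hf4.aemeasurable.ennreal_ofReal 8 4 4
    _ = _ := by
      rw [ENNReal.ofReal_mul (by norm_num), ofReal_integral_eq_lintegral_ofReal hf4
        (.of_forall fun x => by positivity)]
      norm_num
  have hevar := (evariance_le_lintegral_enorm_sq _).trans hmoment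
  exact ⟨hevar, ENNReal.toReal_le_of_le_ofReal (by positivity) hevar⟩

/-- If `M₄(f) = ∫ f⁴ dρ < ∞`, then the variance of the single-sample quantity
`g_{U_j(ℓ)}(x, y)` (with `x, y ∼ ρ` independent, `ℓ` uniform on `{0,…,d-1}` and `U_j(ℓ)`
a uniform subset of `[1:d]∖{j}` of cardinality `ℓ`) is bounded by `16 M₄(f)`;
in particular it is finite. -/
theorem variance_gPF_le {d : ℕ} (μ : Fin d → Measure ℝ)
    [∀ i, IsProbabilityMeasure (μ i)] (f : (Fin d → ℝ) → ℝ)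
    (hf : MemLp f 2 (Measure.pi μ))
    (hf4 : Integrable (fun x => (f x) ^ 4) (Measure.pi μ)) (j : Fin d) :
    ProbabilityTheory.evariance (fun p => gPF f j p.2.2 p.1 p.2.1)
        ((Measure.pi μ).prod ((Measure.pi μ).prod (subsetLaw d j))) ≤
      ENNReal.ofReal (16 * ∫ x, (f x) ^ 4 ∂Measure.pi μ) ∧
    ProbabilityTheory.variance (fun p => gPF f j p.2.2 p.1 p.2.1)
        ((Measure.pi μ).prod ((Measure.pi μ).prod (subsetLaw d j))) ≤
      16 * ∫ x, (f x) ^ 4 ∂Measure.pi μ :=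
  variance_gPF_le_general μ f hf4 j
end
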